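/- arXiv:2112.00125 — 2 statements merged into one kernel-verified Lean document; each statement's English description precedes it below -/
import Mathlib

section
/- Let h : ℝ → ℝ be continuous and strictly positive on [δ,∞), with ∫_δ^∞ 1/h(s) ds < ∞. Let Φ : [t̄,T) → [δ,∞) be differentiable with Φ'(t) ≥ h(Φ(t)) on (t̄,T) and Φ(t̄) = δ. Then T ≤ t̄ + ∫_δ^∞ 1/h(s) ds; i.e., Φ cannot exist on any interval [t̄, t̄ + I + ε) with I = ∫_δ^∞ ds/h(s). -/
/-!
Put `G y = ∫_δ^y ds / h(s)`. Along the solution, `(G ∘ Φ)' = Φ' / h(Φ) ≥ 1`, so `G ∘ Φ` gains at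
least `t - s` between times `s ≤ t`; but `G` takes values in `[0, ∫_δ^∞ ds / h(s)]` on `[δ, ∞)`,
so the existence interval cannot be longer than that integral.
-/

open Set MeasureTheory Filter Topology

lemma lt_of_eventually_le_of_hasDerivAt_ne_zero {f : ℝ → ℝ} {f' a c : ℝ}
    (hle : ∀ᶠ s in 𝓝 a, c ≤ f s) (hf : HasDerivAt f f' a) (hf' : f' ≠ 0) : c < f a :=
  hle.self_of_nhds.lt_of_ne fun hfa =>
    hf' (IsLocalMin.hasDerivAt_eq_zero (hle.mono fun _ hs => hfa ▸ hs) hf)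

lemma hasDerivAt_intervalIntegral_of_continuousOn_Ici {g : ℝ → ℝ} {a y : ℝ}
    (hg : ContinuousOn g (Ici a)) (hy : a < y) :
    HasDerivAt (fun u => ∫ s in a..u, g s) (g y) y := by
  have hgIoi : ContinuousOn g (Ioi a) := hg.mono Ioi_subset_Ici_self
  refine intervalIntegral.integral_hasDerivAt_right ?_
    (hgIoi.stronglyMeasurableAtFilter isOpen_Ioi y hy)
    (hgIoi.continuousAt (isOpen_Ioi.mem_nhds hy))
  exact (hg.mono Icc_subset_Ici_self).intervalIntegrable_of_Icc hy.le

lemma intervalIntegral_le_integral_Ioi {g : ℝ → ℝ} {a y : ℝ} (hay : a ≤ y)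
    (hg : IntegrableOn g (Ioi a)) (hg_nonneg : ∀ s ∈ Ioi a, 0 ≤ g s) :
    ∫ s in a..y, g s ≤ ∫ s in Ioi a, g s := by
  rw [intervalIntegral.integral_of_le hay]
  exact setIntegral_mono_set hg ((ae_restrict_mem measurableSet_Ioi).mono hg_nonneg)
    Ioc_subset_Ioi_self.eventuallyLE

lemma sub_le_image_sub_of_one_le_hasDerivAt {f f' : ℝ → ℝ} {a b : ℝ}
    (hf : ∀ t ∈ Ioo a b, HasDerivAt f (f' t) t) (hf' : ∀ t ∈ Ioo a b, 1 ≤ f' t) :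
    ∀ s ∈ Ioo a b, ∀ t ∈ Ioo a b, s ≤ t → t - s ≤ f t - f s := by
  have hmvt := (convex_Ioo a b).mul_sub_le_image_sub_of_le_deriv (C := 1)
    (fun t ht => (hf t ht).continuousAt.continuousWithinAt)
    (by rw [interior_Ioo]; exact fun t ht => (hf t ht).differentiableAt.differentiableWithinAt)
    (by rw [interior_Ioo]; exact fun t ht => (hf t ht).deriv ▸ hf' t ht)
  simpa only [one_mul] using hmvt

lemma sub_le_of_forall_mem_Ioo_sub_le {a b C : ℝ} (hC : 0 ≤ C)
    (h : ∀ s ∈ Ioo a b, ∀ t ∈ Ioo a b, s ≤ t → t - s ≤ C) : b - a ≤ C := by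
  by_contra! hlt
  have hε : 0 < (b - a - C) / 3 := by linarith
  have := h (a + (b - a - C) / 3) ⟨by linarith, by linarith⟩ (b - (b - a - C) / 3)
    ⟨by linarith, by linarith⟩ (by linarith)
  linarith

theorem blowup_time_upper_bound_general
    (δ tb T : ℝ)
    (h : ℝ → ℝ)
    (hcont : ContinuousOn h (Ici δ))
    (hpos : ∀ s ∈ Ici δ, 0 < h s)
    (hint : IntegrableOn (fun s => 1 / h s) (Ioi δ))
    (Φ Φ' : ℝ → ℝ)
    (hrange : ∀ t ∈ Ico tb T, Φ t ∈ Ici δ)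
    (hderiv : ∀ t ∈ Ioo tb T, HasDerivAt Φ (Φ' t) t)
    (hineq : ∀ t ∈ Ioo tb T, h (Φ t) ≤ Φ' t) :
    T ≤ tb + ∫ s in Ioi δ, 1 / h s := by
  set I := ∫ s in Ioi δ, 1 / h s
  set G : ℝ → ℝ := fun y => ∫ s in δ..y, 1 / h s
  have hrange' : ∀ t ∈ Ioo tb T, δ ≤ Φ t := fun t ht => hrange t (Ioo_subset_Ico_self ht)
  have hΦ'_pos : ∀ t ∈ Ioo tb T, 0 < Φ' t := fun t ht =>
    (hpos _ (hrange' t ht)).trans_le (hineq t ht)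
  -- needed because `G` is differentiable only on `(δ, ∞)`; `Φ = δ` inside would be a local minimum
  have hΦ_gt : ∀ t ∈ Ioo tb T, δ < Φ t := fun t ht =>
    lt_of_eventually_le_of_hasDerivAt_ne_zero (eventually_of_mem (Ioo_mem_nhds ht.1 ht.2) hrange')
      (hderiv t ht) (hΦ'_pos t ht).ne'
  have hGΦ : ∀ t ∈ Ioo tb T, HasDerivAt (G ∘ Φ) (1 / h (Φ t) * Φ' t) t := fun t ht =>
    (hasDerivAt_intervalIntegral_of_continuousOn_Ici
      (continuousOn_const.div hcont fun s hs => (hpos s hs).ne') (hΦ_gt t ht)).comp t (hderiv t ht)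
  have hGΦ_ge : ∀ t ∈ Ioo tb T, 1 ≤ 1 / h (Φ t) * Φ' t := fun t ht => by
    rw [one_div_mul_eq_div, one_le_div (hpos _ (hrange' t ht))]
    exact hineq t ht
  have h_nonneg : ∀ s ∈ Ici δ, 0 ≤ 1 / h s := fun s hs => (one_div_pos.2 (hpos s hs)).le
  have h_nonneg' : ∀ s ∈ Ioi δ, 0 ≤ 1 / h s := fun s hs => h_nonneg s (Ioi_subset_Ici_self hs)
  have hgain : ∀ s ∈ Ioo tb T, ∀ t ∈ Ioo tb T, s ≤ t → t - s ≤ I := by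
    intro s hs t ht hst
    calc t - s ≤ G (Φ t) - G (Φ s) :=
          sub_le_image_sub_of_one_le_hasDerivAt hGΦ hGΦ_ge s hs t ht hst
      _ ≤ I - 0 :=
        sub_le_sub (intervalIntegral_le_integral_Ioi (hrange' t ht) hint h_nonneg')
          (intervalIntegral.integral_nonneg (hrange' s hs) fun u hu => h_nonneg u hu.1)
      _ = I := sub_zero _
  linarith [sub_le_of_forall_mem_Ioo_sub_le (setIntegral_nonneg measurableSet_Ioi h_nonneg') hgain]

theorem blowup_time_upper_bound
    (δ tb T : ℝ) (hδ : 0 < δ) (htbT : tb < T)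
    (h : ℝ → ℝ)
    (hcont : ContinuousOn h (Ici δ))
    (hpos : ∀ s ∈ Ici δ, 0 < h s)
    (hint : IntegrableOn (fun s => 1 / h s) (Ioi δ))
    (Φ Φ' : ℝ → ℝ)
    (hrange : ∀ t ∈ Ico tb T, Φ t ∈ Ici δ)
    (hderiv : ∀ t ∈ Ioo tb T, HasDerivAt Φ (Φ' t) t)
    (hineq : ∀ t ∈ Ioo tb T, h (Φ t) ≤ Φ' t)
    (hstart : Φ tb = δ) :
    T ≤ tb + ∫ s in Ioi δ, 1 / h s :=
  blowup_time_upper_bound_general δ tb T h hcont hpos hint Φ Φ' hrange hderiv hineq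
end

section
/- Let h be convex increasing on [0,∞) with h(0)=0 and h'(0)=α>0, and suppose ∫_δ^∞ 1/h < ∞ for some δ>0. Let Φ:[0,T)→[0,∞) be C¹ with Φ(0)∈(0,δ) and Φ'(t) ≥ h(Φ(t)) on (0,T). If T = ∞, then Φ(0) ≤ C e^{−α T'} for all sufficiently large T', where C = exp(α·∫_δ^∞ 1/h(z)dz + log δ) = δ·exp(α ∫_δ^∞ dz/h(z)); since Φ(0)>0 this is impossible, and hence T < ∞. -/
open Set MeasureTheory Real

theorem no_global_solution_of_superlinear_ode
    (α δ : ℝ) (hα : 0 < α) (hδ : 0 < δ)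
    (h : ℝ → ℝ)
    (hconv : ConvexOn ℝ (Ici (0:ℝ)) h)
    (hmono : MonotoneOn h (Ici (0:ℝ)))
    (h0 : h 0 = 0)
    (hderiv0 : HasDerivWithinAt h α (Ici (0:ℝ)) 0)
    (hint : IntegrableOn (fun s => 1 / h s) (Ioi δ))
    (Φ Φ' : ℝ → ℝ)
    (hrange : ∀ t : ℝ, 0 ≤ t → 0 ≤ Φ t)
    (hinit : Φ 0 ∈ Ioo 0 δ)
    (hC1 : ∀ t : ℝ, 0 < t → HasDerivAt Φ (Φ' t) t)
    (hcont : ContinuousOn Φ (Ici 0))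
    (hineq : ∀ t : ℝ, 0 < t → h (Φ t) ≤ Φ' t) :
    False := by
  obtain ⟨hΦ0pos, hΦ0δ⟩ := hinit
  -- h is nonnegative on [0, ∞)
  have hpos : ∀ s : ℝ, 0 ≤ s → 0 ≤ h s := by
    intro s hs
    have := hmono (mem_Ici.2 le_rfl) (mem_Ici.2 hs) hs
    simpa [h0] using this
  -- linear lower bound : α s ≤ h s
  have hlin : ∀ s : ℝ, 0 ≤ s → α * s ≤ h s := by
    intro s hs
    rcases hs.eq_or_lt with rfl | hs'
    · simp [h0]
    · have hsl := hconv.le_slope_of_hasDerivWithinAt (mem_Ici.2 le_rfl)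
        (mem_Ici.2 hs) hs' hderiv0
      rw [slope_def_field] at hsl
      have : α ≤ h s / s := by simpa [h0] using hsl
      calc α * s ≤ (h s / s) * s := by nlinarith
        _ = h s := by field_simp
  have hposs : ∀ s : ℝ, 0 < s → 0 < h s := fun s hs =>
    lt_of_lt_of_le (by positivity) (hlin s hs.le)
  -- Φ is monotone on [0,∞)
  have hΦmono : MonotoneOn Φ (Ici (0:ℝ)) := by
    apply monotoneOn_of_hasDerivWithinAt_nonneg (convex_Ici 0) hcont
    · intro t ht
      rw [interior_Ici] at ht
      exact (hC1 t ht).hasDerivWithinAt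
    · intro t ht
      rw [interior_Ici] at ht
      exact le_trans (hpos _ (hrange t ht.le)) (hineq t ht)
  -- exponential lower bound : Φ 0 * exp (α t) ≤ Φ t
  have hexp : ∀ t : ℝ, 0 ≤ t → Φ 0 * Real.exp (α * t) ≤ Φ t := by
    have hψmono : MonotoneOn (fun t => Φ t * Real.exp (-α * t)) (Ici (0:ℝ)) := by
      apply monotoneOn_of_hasDerivWithinAt_nonneg (convex_Ici 0)
        (f' := fun t => Φ' t * Real.exp (-α * t) + Φ t * (Real.exp (-α * t) * (-α)))
      · exact hcont.mul (Real.continuous_exp.comp (continuous_const.mul continuous_id)).continuousOn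
      · intro t ht
        rw [interior_Ici] at ht
        have he : HasDerivAt (fun t : ℝ => Real.exp (-α * t)) (Real.exp (-α * t) * (-α)) t := by
          simpa using (((hasDerivAt_id t).const_mul (-α)).exp)
        exact ((hC1 t ht).mul he).hasDerivWithinAt
      · intro t ht
        rw [interior_Ici] at ht
        have h1 : α * Φ t ≤ Φ' t := le_trans (hlin _ (hrange t ht.le)) (hineq t ht)
        have h2 : (0:ℝ) < Real.exp (-α * t) := Real.exp_pos _
        nlinarith
    intro t ht
    have := hψmono (mem_Ici.2 le_rfl) (mem_Ici.2 ht) ht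
    simp only [neg_mul, mul_zero, neg_zero, Real.exp_zero, mul_one] at this
    have h2 : (0:ℝ) < Real.exp (α * t) := Real.exp_pos _
    calc Φ 0 * Real.exp (α * t) ≤ (Φ t * Real.exp (-(α * t))) * Real.exp (α * t) := by
          nlinarith
      _ = Φ t := by rw [mul_assoc, ← Real.exp_add]; simp
  -- a time t1 ≥ 1 past which Φ > δ
  set t1 : ℝ := max 1 (Real.log (δ / Φ 0) / α + 1) with ht1def
  have ht1pos : (0:ℝ) < t1 := lt_of_lt_of_le one_pos (le_max_left _ _)
  have hΦt1 : δ < Φ t1 := by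
    have hlt : Real.log (δ / Φ 0) < α * t1 := by
      have h1 : Real.log (δ / Φ 0) / α + 1 ≤ t1 := le_max_right _ _
      have := (div_le_iff₀ hα).1 (by linarith : Real.log (δ / Φ 0) / α ≤ t1 - 1)
      nlinarith
    have hexp' : δ / Φ 0 < Real.exp (α * t1) := by
      calc δ / Φ 0 = Real.exp (Real.log (δ / Φ 0)) :=
            (Real.exp_log (by positivity)).symm
        _ < Real.exp (α * t1) := Real.exp_lt_exp.2 hlt
    calc δ = (δ / Φ 0) * Φ 0 := by field_simp
      _ < Real.exp (α * t1) * Φ 0 := by nlinarith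
      _ = Φ 0 * Real.exp (α * t1) := mul_comm _ _
      _ ≤ Φ t1 := hexp t1 ht1pos.le
  have hΦbig : ∀ t : ℝ, t1 ≤ t → δ < Φ t := fun t ht =>
    lt_of_lt_of_le hΦt1 (hΦmono (mem_Ici.2 ht1pos.le) (mem_Ici.2 (ht1pos.le.trans ht)) ht)
  -- continuity of 1/h on (0,∞)
  have hhc : ContinuousOn h (Ioi (0:ℝ)) := by
    have := hconv.continuousOn_interior
    rwa [interior_Ici] at this
  have hinvc : ∀ u : ℝ, 0 < u → ContinuousAt (fun s => 1 / h s) u := by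
    intro u hu
    have hcu : ContinuousAt h u := hhc.continuousAt (isOpen_Ioi.mem_nhds hu)
    exact continuousAt_const.div hcu (ne_of_gt (hposs u hu))
  -- interval integrability of 1/h
  have hii : ∀ u : ℝ, δ ≤ u → IntervalIntegrable (fun s => 1 / h s) volume δ u := by
    intro u hu
    apply ContinuousOn.intervalIntegrable
    intro s hs
    rw [uIcc_of_le hu] at hs
    exact (hinvc s (lt_of_lt_of_le hδ hs.1)).continuousWithinAt
  -- F t = ∫_{δ}^{Φ t} ds / h s
  set F : ℝ → ℝ := fun t => ∫ s in δ..(Φ t), 1 / h s with hFdef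
  have hFderiv : ∀ t : ℝ, t1 ≤ t →
      HasDerivAt F ((1 / h (Φ t)) * Φ' t) t := by
    intro t ht
    have htpos : 0 < t := lt_of_lt_of_le ht1pos ht
    have hΦt : δ < Φ t := hΦbig t ht
    have HH : HasDerivAt (fun u => ∫ s in δ..u, 1 / h s) (1 / h (Φ t)) (Φ t) := by
      apply intervalIntegral.integral_hasDerivAt_right (hii _ hΦt.le)
      · exact ContinuousAt.stronglyMeasurableAtFilter isOpen_Ioi
          (fun x hx => hinvc x hx) (Φ t) (lt_trans hδ hΦt)
      · exact hinvc _ (lt_trans hδ hΦt)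
    exact HH.comp t (hC1 t htpos)
  -- F t - t is monotone on [t1, ∞)
  have hGmono : MonotoneOn (fun t => F t - t) (Ici t1) := by
    apply monotoneOn_of_hasDerivWithinAt_nonneg (convex_Ici t1)
      (f' := fun t => (1 / h (Φ t)) * Φ' t - 1)
    · intro t ht
      exact (((hFderiv t ht).sub (hasDerivAt_id t)).continuousAt).continuousWithinAt
    · intro t ht
      rw [interior_Ici] at ht
      exact ((hFderiv t ht.le).sub (hasDerivAt_id t)).hasDerivWithinAt
    · intro t ht
      rw [interior_Ici] at ht
      have hΦt : δ < Φ t := hΦbig t ht.le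
      have hh : 0 < h (Φ t) := hposs _ (lt_trans hδ hΦt)
      have h1 : h (Φ t) ≤ Φ' t := hineq t (lt_trans ht1pos ht)
      have : (1:ℝ) ≤ (1 / h (Φ t)) * Φ' t := by
        rw [one_div, ← inv_mul_cancel₀ (ne_of_gt hh)]
        gcongr
      linarith
  -- the uniform bound : F t ≤ M
  set M : ℝ := ∫ s in Ioi δ, 1 / h s with hMdef
  have hFle : ∀ t : ℝ, t1 ≤ t → F t ≤ M := by
    intro t ht
    have hΦt : δ < Φ t := hΦbig t ht
    show (∫ s in δ..(Φ t), 1 / h s) ≤ M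
    rw [intervalIntegral.integral_of_le hΦt.le]
    apply setIntegral_mono_set hint
    · refine (ae_restrict_iff' measurableSet_Ioi).2 (Filter.Eventually.of_forall ?_)
      intro s hs
      have hs' : 0 < h s := hposs s (lt_trans hδ hs)
      positivity
    · exact HasSubset.Subset.eventuallyLE Ioc_subset_Ioi_self
  -- F t1 ≥ 0
  have hF0 : 0 ≤ F t1 := by
    apply intervalIntegral.integral_nonneg (hΦbig t1 le_rfl).le
    intro u hu
    have : 0 < h u := hposs u (lt_of_lt_of_le hδ hu.1)
    positivity
  -- M is nonnegative
  have hM0 : 0 ≤ M := by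
    apply setIntegral_nonneg measurableSet_Ioi
    intro s hs
    have hs' : 0 < h s := hposs s (lt_trans hδ hs)
    positivity
  -- contradiction
  have hT : t1 ≤ t1 + M + 1 := by linarith
  have hkey := hGmono (mem_Ici.2 le_rfl) (mem_Ici.2 hT) hT
  have h1 : F (t1 + M + 1) ≤ M := hFle _ hT
  simp only at hkey
  linarith
end
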